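/- For any density matrix ρ_AB on ℂ^{d_A} ⊗ ℂ^{d_B} and any ε ∈ (0,1), the smooth conditional min-entropy satisfies −H_min^ε(A|B)_ρ = inf over density matrices σ_B on ℂ^{d_B} of D_max^ε(ρ_AB ‖ I_A ⊗ σ_B); that is, smoothing and the optimization over σ_B can be interchanged. -/

import Mathlib

open Kronecker ComplexOrder
open scoped BigOperators

/-- Apply a real function to the eigenvalues of a Hermitian matrix (junk value `0` otherwise). -/
noncomputable def matFun {ι : Type*} [Fintype ι] [DecidableEq ι] (f : ℝ → ℝ)
    (M : Matrix ι ι ℂ) : Matrix ι ι ℂ :=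
  if hM : M.IsHermitian then
    (hM.eigenvectorUnitary : Matrix ι ι ℂ) *
      Matrix.diagonal (fun i => (f (hM.eigenvalues i) : ℂ)) *
      star (hM.eigenvectorUnitary : Matrix ι ι ℂ)
  else 0

/-- Matrix logarithm (base 2) on the support: `log₂` applied to nonzero eigenvalues, `0 log 0 = 0`. -/
noncomputable def matLog {ι : Type*} [Fintype ι] [DecidableEq ι] (M : Matrix ι ι ℂ) :
    Matrix ι ι ℂ :=
  matFun (fun x => if x = 0 then 0 else Real.logb 2 x) M

/-- Matrix square root of a Hermitian (in practice positive semidefinite) matrix. -/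
noncomputable def matSqrt {ι : Type*} [Fintype ι] [DecidableEq ι] (M : Matrix ι ι ℂ) :
    Matrix ι ι ℂ :=
  matFun Real.sqrt M

/-- A density matrix: positive semidefinite with unit trace. -/
def IsDensity {ι : Type*} [Fintype ι] (ρ : Matrix ι ι ℂ) : Prop :=
  ρ.PosSemidef ∧ Matrix.trace ρ = 1

/-- A subnormalized state: positive semidefinite with trace at most 1. -/
def IsSubnormalized {ι : Type*} [Fintype ι] (ρ : Matrix ι ι ℂ) : Prop :=
  ρ.PosSemidef ∧ (Matrix.trace ρ).re ≤ 1

/-- Von Neumann entropy (base 2): `H(ρ) = -Tr[ρ log ρ]`. -/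
noncomputable def vnEntropy {ι : Type*} [Fintype ι] [DecidableEq ι] (ρ : Matrix ι ι ℂ) : ℝ :=
  -(Matrix.trace (ρ * matLog ρ)).re

/-- Quantum relative entropy (base 2): `D(ρ‖σ) = Tr[ρ (log ρ - log σ)]`. -/
noncomputable def qRelEnt {ι : Type*} [Fintype ι] [DecidableEq ι]
    (ρ σ : Matrix ι ι ℂ) : ℝ :=
  (Matrix.trace (ρ * (matLog ρ - matLog σ))).re

/-- Square root of the quantum information variance `V(ρ‖σ)`. -/
noncomputable def sqrtQVar {ι : Type*} [Fintype ι] [DecidableEq ι]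
    (ρ σ : Matrix ι ι ℂ) : ℝ :=
  Real.sqrt ((Matrix.trace (ρ * ((matLog ρ - matLog σ) * (matLog ρ - matLog σ)))).re
    - qRelEnt ρ σ ^ 2)

/-- Loewner order: `A ≤ B` iff `B - A` is positive semidefinite. -/
def LoewnerLE {ι : Type*} [Fintype ι] (A B : Matrix ι ι ℂ) : Prop :=
  (B - A).PosSemidef

/-- Max-relative entropy `D_max(ρ‖ω) = inf {γ : ρ ≤ 2^γ ω}` (base 2). -/
noncomputable def Dmax {ι : Type*} [Fintype ι] (ρ ω : Matrix ι ι ℂ) : ℝ :=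
  sInf {γ : ℝ | LoewnerLE ρ (((2 : ℝ) ^ γ) • ω)}

/-- Fidelity `F(ρ,σ) = Tr √(√ρ σ √ρ)`. -/
noncomputable def fidelity {ι : Type*} [Fintype ι] [DecidableEq ι]
    (ρ σ : Matrix ι ι ℂ) : ℝ :=
  (Matrix.trace (matSqrt (matSqrt ρ * σ * matSqrt ρ))).re

/-- The ε-ball around a state: subnormalized states with `F(ρ̄,ρ)² ≥ 1 - ε²`. -/
def fidelityBall {ι : Type*} [Fintype ι] [DecidableEq ι] (ε : ℝ) (ρ : Matrix ι ι ℂ) :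
    Set (Matrix ι ι ℂ) :=
  {ρ' | IsSubnormalized ρ' ∧ 1 - ε ^ 2 ≤ fidelity ρ' ρ ^ 2}

/-- Smooth max-relative entropy. -/
noncomputable def DmaxSmooth {ι : Type*} [Fintype ι] [DecidableEq ι]
    (ε : ℝ) (ρ ω : Matrix ι ι ℂ) : ℝ :=
  sInf {x : ℝ | ∃ ρ' ∈ fidelityBall ε ρ, x = Dmax ρ' ω}

/-- Conditional min-entropy `H_min(A|B)_ρ = max_{σ_B} (-D_max(ρ_AB ‖ I_A ⊗ σ_B))`. -/
noncomputable def Hmin {α β : Type*} [Fintype α] [Fintype β] [DecidableEq α] [DecidableEq β]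
    (ρ : Matrix (α × β) (α × β) ℂ) : ℝ :=
  sSup {x : ℝ | ∃ σ : Matrix β β ℂ, IsDensity σ ∧ x = -Dmax ρ ((1 : Matrix α α ℂ) ⊗ₖ σ)}

/-- Smooth conditional min-entropy. -/
noncomputable def HminSmooth {α β : Type*} [Fintype α] [Fintype β] [DecidableEq α] [DecidableEq β]
    (ε : ℝ) (ρ : Matrix (α × β) (α × β) ℂ) : ℝ :=
  sSup {x : ℝ | ∃ ρ' ∈ fidelityBall ε ρ, x = Hmin ρ'}

/-- Partial trace over the first tensor factor. -/
noncomputable def ptrace₁ {α β : Type*} [Fintype α] (M : Matrix (α × β) (α × β) ℂ) :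
    Matrix β β ℂ :=
  Matrix.of fun j j' => ∑ i, M (i, j) (i, j')

/-- Partial trace over the second tensor factor. -/
noncomputable def ptrace₂ {α β : Type*} [Fintype β] (M : Matrix (α × β) (α × β) ℂ) :
    Matrix α α ℂ :=
  Matrix.of fun i i' => ∑ j, M (i, j) (i', j)

/-- Rank-one projector `|ψ⟩⟨ψ|` associated with a vector. -/
noncomputable def pureState {ι : Type*} (ψ : ι → ℂ) : Matrix ι ι ℂ :=
  Matrix.of fun x y => ψ x * star (ψ y)

/-- The `n`-fold tensor power of a bipartite state, with the `A` systems grouped together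
and the `B` systems grouped together. -/
noncomputable def iidState {α β : Type*} (ρ : Matrix (α × β) (α × β) ℂ) (n : ℕ) :
    Matrix ((Fin n → α) × (Fin n → β)) ((Fin n → α) × (Fin n → β)) ℂ :=
  Matrix.of fun x y => ∏ k, ρ (x.1 k, x.2 k) (y.1 k, y.2 k)

/-- The `n`-fold tensor power of a state on a single system. -/
noncomputable def tensorPow {ι : Type*} (ρ : Matrix ι ι ℂ) (n : ℕ) :
    Matrix (Fin n → ι) (Fin n → ι) ℂ :=
  Matrix.of fun x y => ∏ k, ρ (x k) (y k)

/-- Cumulative distribution function of a standard normal random variable. -/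
noncomputable def stdGaussianCDF (x : ℝ) : ℝ :=
  ∫ t in Set.Iic x, Real.exp (-t ^ 2 / 2) / Real.sqrt (2 * Real.pi)

/-- Generalized inverse `Φ⁻¹(t) = sup {x : Φ(x) ≤ t}` of the standard normal CDF. -/
noncomputable def stdGaussianCDFInv (t : ℝ) : ℝ :=
  sSup {x : ℝ | stdGaussianCDF x ≤ t}

open Matrix
variable {ι : Type*} [Fintype ι] [DecidableEq ι]

section sqrtCompat
open scoped MatrixOrder

noncomputable def Matrix.PosSemidef.sqrt {A : Matrix ι ι ℂ} (_hA : A.PosSemidef) :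
    Matrix ι ι ℂ :=
  CFC.sqrt A

lemma Matrix.PosSemidef.posSemidef_sqrt {A : Matrix ι ι ℂ} (hA : A.PosSemidef) :
    hA.sqrt.PosSemidef :=
  nonneg_iff_posSemidef.mp (CFC.sqrt_nonneg A)

lemma Matrix.PosSemidef.sqrt_mul_self {A : Matrix ι ι ℂ} (hA : A.PosSemidef) :
    hA.sqrt * hA.sqrt = A :=
  CFC.sqrt_mul_sqrt_self A (nonneg_iff_posSemidef.mpr hA)

lemma Matrix.PosSemidef.sqrt_sq {A : Matrix ι ι ℂ} (hA : A.PosSemidef) :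
    (hA.pow 2).sqrt = A :=
  CFC.sqrt_sq A (nonneg_iff_posSemidef.mpr hA)

lemma matSqrt_eq_sqrt {A : Matrix ι ι ℂ} (hA : A.PosSemidef) : matSqrt A = hA.sqrt := by
  rw [matSqrt, matFun, dif_pos hA.1, Matrix.PosSemidef.sqrt, CFC.sqrt_eq_cfc,
    cfc_nnreal_eq_real _ A, hA.1.cfc_eq]
  simp [IsHermitian.cfc, Function.comp_def, max_eq_left (hA.eigenvalues_nonneg _)]

end sqrtCompat

lemma trace_matFun {A : Matrix ι ι ℂ} (hA : A.IsHermitian) (f : ℝ → ℝ) :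
    Matrix.trace (matFun f A) = ∑ i, (f (hA.eigenvalues i) : ℂ) := by
  rw [matFun, dif_pos hA, Matrix.trace_mul_cycle,
    Unitary.coe_star_mul_self, one_mul, Matrix.trace_diagonal]

lemma trace_eq_sum_eigenvalues {A : Matrix ι ι ℂ} (hA : A.IsHermitian) :
    Matrix.trace A = ∑ i, (hA.eigenvalues i : ℂ) := by
  conv_lhs => rw [hA.spectral_theorem, Unitary.conjStarAlgAut_apply]
  rw [Matrix.trace_mul_cycle, Unitary.coe_star_mul_self, one_mul, Matrix.trace_diagonal]
  rfl
lemma diag_re_nonneg' {A : Matrix ι ι ℂ} (hA : A.PosSemidef) (i : ι) :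
    0 ≤ (A i i).re := by
  have := hA.re_dotProduct_nonneg (Pi.single i 1)
  simpa [dotProduct, Matrix.mulVec, Pi.single_apply, Finset.sum_ite_eq] using this

lemma trace_re_nonneg' {A : Matrix ι ι ℂ} (hA : A.PosSemidef) :
    0 ≤ (Matrix.trace A).re := by
  rw [Matrix.trace, Complex.re_sum]
  exact Finset.sum_nonneg fun i _ => diag_re_nonneg' hA i

lemma diag_re_le_trace' {A : Matrix ι ι ℂ} (hA : A.PosSemidef) (i : ι) :
    (A i i).re ≤ (Matrix.trace A).re := by
  rw [Matrix.trace, Complex.re_sum]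
  exact Finset.single_le_sum (fun j _ => diag_re_nonneg' hA j) (Finset.mem_univ i)
lemma trace_mul_re_le {A B : Matrix ι ι ℂ} (hA : A.PosSemidef) (hB : B.PosSemidef) :
    (Matrix.trace (A * B)).re ≤ (Matrix.trace A).re * (Matrix.trace B).re := by
  set V : Matrix ι ι ℂ := (hB.1.eigenvectorUnitary : Matrix ι ι ℂ) with hV
  have hVV : V * star V = 1 := by
    rw [hV]; exact (Matrix.mem_unitaryGroup_iff).mp hB.1.eigenvectorUnitary.2
  set C : Matrix ι ι ℂ := Vᴴ * A * V with hC
  have hCpsd : C.PosSemidef := hA.conjTranspose_mul_mul_same V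
  have htrC : Matrix.trace C = Matrix.trace A := by
    rw [hC, Matrix.trace_mul_cycle, ← Matrix.star_eq_conjTranspose, hVV, one_mul]
  have h1 : Matrix.trace (A * B) =
      Matrix.trace (C * Matrix.diagonal (RCLike.ofReal ∘ hB.1.eigenvalues)) := by
    conv_lhs => rw [hB.1.spectral_theorem, Unitary.conjStarAlgAut_apply]
    rw [Matrix.star_eq_conjTranspose, ← mul_assoc, Matrix.trace_mul_cycle, ← mul_assoc, hC]
  have h2 : (Matrix.trace (C * Matrix.diagonal (RCLike.ofReal ∘ hB.1.eigenvalues))).re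
      = ∑ i, (C i i).re * hB.1.eigenvalues i := by
    rw [Matrix.trace, Complex.re_sum]
    congr 1; ext i
    rw [Matrix.diag_apply, Matrix.mul_diagonal]
    simp [Complex.mul_re]
  rw [h1, h2]
  have h3 : (Matrix.trace B).re = ∑ i, hB.1.eigenvalues i := by
    rw [trace_eq_sum_eigenvalues hB.1, Complex.re_sum]
    simp
  rw [h3, Finset.mul_sum]
  apply Finset.sum_le_sum
  intro i _
  have := diag_re_le_trace' hCpsd i
  rw [htrC] at this
  exact mul_le_mul_of_nonneg_right this (hB.eigenvalues_nonneg i)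
lemma fidelity_sq_le {σ τ : Matrix ι ι ℂ} (h' : σ.PosSemidef) (h : τ.PosSemidef)
    (htr : (Matrix.trace τ).re ≤ 1) :
    fidelity σ τ ^ 2 ≤ (Fintype.card ι : ℝ) * (Matrix.trace σ).re := by
  have hs : matSqrt σ = h'.sqrt := matSqrt_eq_sqrt h'
  have hsH : (h'.sqrt)ᴴ = h'.sqrt := h'.posSemidef_sqrt.1
  have hM : (h'.sqrt * τ * h'.sqrt).PosSemidef := by
    have := h.mul_mul_conjTranspose_same h'.sqrt
    rwa [hsH] at this
  have hfid : fidelity σ τ = ∑ i, Real.sqrt (hM.1.eigenvalues i) := by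
    rw [fidelity, hs, matSqrt, trace_matFun hM.1, Complex.re_sum]
    simp
  have htrM : (Matrix.trace (h'.sqrt * τ * h'.sqrt)).re = ∑ i, hM.1.eigenvalues i := by
    rw [trace_eq_sum_eigenvalues hM.1, Complex.re_sum]; simp
  have hMtr : (Matrix.trace (h'.sqrt * τ * h'.sqrt)).re ≤ (Matrix.trace σ).re := by
    rw [Matrix.trace_mul_cycle, Matrix.PosSemidef.sqrt_mul_self]
    calc (Matrix.trace (σ * τ)).re ≤ (Matrix.trace σ).re * (Matrix.trace τ).re :=
          trace_mul_re_le h' h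
      _ ≤ (Matrix.trace σ).re * 1 :=
          mul_le_mul_of_nonneg_left htr (trace_re_nonneg' h')
      _ = (Matrix.trace σ).re := mul_one _
  calc fidelity σ τ ^ 2 = (∑ i, Real.sqrt (hM.1.eigenvalues i)) ^ 2 := by rw [hfid]
    _ ≤ (Fintype.card ι : ℝ) * ∑ i, Real.sqrt (hM.1.eigenvalues i) ^ 2 := by
        simpa using sq_sum_le_card_mul_sum_sq (s := Finset.univ)
          (f := fun i => Real.sqrt (hM.1.eigenvalues i))
    _ = (Fintype.card ι : ℝ) * ∑ i, hM.1.eigenvalues i := by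
        congr 1; exact Finset.sum_congr rfl fun i _ =>
          Real.sq_sqrt (hM.eigenvalues_nonneg i)
    _ ≤ (Fintype.card ι : ℝ) * (Matrix.trace σ).re := by
        rw [← htrM]
        exact mul_le_mul_of_nonneg_left hMtr (Nat.cast_nonneg _)
lemma fidelity_self {ρ : Matrix ι ι ℂ} (h : ρ.PosSemidef) :
    fidelity ρ ρ = (Matrix.trace ρ).re := by
  rw [fidelity, matSqrt_eq_sqrt h]
  set s := h.sqrt with hs
  have hss : s * s = ρ := h.sqrt_mul_self
  have key : s * ρ * s = ρ ^ 2 := by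
    rw [← hss]; noncomm_ring
  rw [key, matSqrt_eq_sqrt (h.pow 2), h.sqrt_sq]

lemma trace_one_kron {α β : Type*} [Fintype α] [Fintype β] [DecidableEq α]
    {σ : Matrix β β ℂ} (hσ : IsDensity σ) :
    Matrix.trace ((1 : Matrix α α ℂ) ⊗ₖ σ) = (Fintype.card α : ℂ) := by
  rw [Matrix.trace_kronecker, Matrix.trace_one, hσ.2, mul_one]

lemma gamma_bound {α β : Type*} [Fintype α] [Fintype β] [DecidableEq α] [DecidableEq β]
    {ρ' : Matrix (α × β) (α × β) ℂ} {σ : Matrix β β ℂ}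
    (hσ : IsDensity σ) {γ : ℝ}
    (hγ : LoewnerLE ρ' (((2 : ℝ) ^ γ) • ((1 : Matrix α α ℂ) ⊗ₖ σ))) :
    (Matrix.trace ρ').re ≤ (2 : ℝ) ^ γ * (Fintype.card α : ℝ) := by
  have h0 := trace_re_nonneg' hγ
  rw [Matrix.trace_sub, Matrix.trace_smul, Complex.sub_re] at h0
  have htr : Matrix.trace ((1 : Matrix α α ℂ) ⊗ₖ σ) = (Fintype.card α : ℂ) := by
    exact trace_one_kron hσ
  rw [htr] at h0
  have : (((2:ℝ) ^ γ) • ((Fintype.card α : ℂ))).re = (2:ℝ) ^ γ * (Fintype.card α : ℝ) := by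
    simp [Complex.smul_re]
  linarith [sub_nonneg.mp h0]
lemma Dmax_lb {α β : Type*} [Fintype α] [Fintype β] [DecidableEq α] [DecidableEq β]
    {ρ' : Matrix (α × β) (α × β) ℂ} {σ : Matrix β β ℂ}
    (hσ : IsDensity σ) {t : ℝ} (ht : 0 < t) (htr : t ≤ (Matrix.trace ρ').re) :
    min (Real.logb 2 (t / (Fintype.card α : ℝ))) 0 ≤ Dmax ρ' ((1 : Matrix α α ℂ) ⊗ₖ σ) := by
  rw [Dmax]
  rcases Set.eq_empty_or_nonempty
      {γ : ℝ | LoewnerLE ρ' (((2:ℝ) ^ γ) • ((1 : Matrix α α ℂ) ⊗ₖ σ))} with he | hne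
  · rw [he, Real.sInf_empty]
    exact min_le_right _ _
  · refine le_trans (min_le_left _ _) (le_csInf hne ?_)
    intro γ hγ
    have hb := gamma_bound hσ (ρ' := ρ') hγ
    have hcard : (0:ℝ) < (Fintype.card α : ℝ) := by
      by_contra hc
      push_neg at hc
      have : (Fintype.card α : ℝ) = 0 := le_antisymm hc (Nat.cast_nonneg _)
      rw [this, mul_zero] at hb
      linarith
    have h2 : t / (Fintype.card α : ℝ) ≤ (2:ℝ) ^ γ := by
      rw [div_le_iff₀ hcard]
      linarith
    calc Real.logb 2 (t / (Fintype.card α : ℝ)) ≤ Real.logb 2 ((2:ℝ) ^ γ) :=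
          Real.logb_le_logb_of_le (by norm_num) (by positivity) h2
      _ = γ := Real.logb_rpow (by norm_num) (by norm_num)

/-- smoothing and the optimization over `σ_B` can be interchanged:
`−H_min^ε(A|B)_ρ = inf_{σ_B} D_max^ε(ρ_AB ‖ I_A ⊗ σ_B)`. -/
theorem neg_HminSmooth_eq_inf_DmaxSmooth {dA dB : ℕ}
    (ρ : Matrix (Fin dA × Fin dB) (Fin dA × Fin dB) ℂ) (hρ : IsDensity ρ)
    (ε : ℝ) (hε : ε ∈ Set.Ioo (0 : ℝ) 1) :
    -(HminSmooth ε ρ) =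
      sInf {x : ℝ | ∃ σ : Matrix (Fin dB) (Fin dB) ℂ, IsDensity σ ∧
        x = DmaxSmooth ε ρ ((1 : Matrix (Fin dA) (Fin dA) ℂ) ⊗ₖ σ)} := by
  obtain ⟨hε0, hε1⟩ := hε
  have hρ1 : (Matrix.trace ρ).re = 1 := by rw [hρ.2]; simp
  have hcard : 0 < Fintype.card (Fin dA × Fin dB) := by
    by_contra h
    push_neg at h
    have h0 : Fintype.card (Fin dA × Fin dB) = 0 := Nat.le_zero.mp h
    haveI := Fintype.card_eq_zero_iff.mp h0
    have h1 : Matrix.trace ρ = 0 := by simp [Matrix.trace]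
    exact one_ne_zero (hρ.2.symm.trans h1)
  have hprod : 0 < dA * dB := by simpa [Fintype.card_prod] using hcard
  have hdA : 0 < dA := Nat.pos_of_ne_zero (by rintro rfl; simp at hprod)
  have hdB : 0 < dB := Nat.pos_of_ne_zero (by rintro rfl; simp at hprod)
  set d : ℝ := (Fintype.card (Fin dA × Fin dB) : ℝ) with hddef
  have hd : 0 < d := by rw [hddef]; exact_mod_cast hcard
  set t₀ : ℝ := (1 - ε ^ 2) / d with ht₀def
  have hεsq : ε ^ 2 < 1 := by nlinarith
  have ht₀ : 0 < t₀ := div_pos (by linarith) hd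
  have hball : ∀ ρ' ∈ fidelityBall ε ρ, ρ'.PosSemidef ∧ t₀ ≤ (Matrix.trace ρ').re := by
    rintro ρ' ⟨⟨hpsd, _⟩, hfid⟩
    refine ⟨hpsd, ?_⟩
    have h1 := fidelity_sq_le hpsd hρ.1 (le_of_eq hρ1)
    rw [ht₀def, div_le_iff₀ hd, mul_comm]
    rw [← hddef] at h1
    linarith
  set c : ℝ := min (Real.logb 2 (t₀ / (dA : ℝ))) 0 with hcdef
  have hflb : ∀ ρ' ∈ fidelityBall ε ρ, ∀ σ : Matrix (Fin dB) (Fin dB) ℂ, IsDensity σ →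
      c ≤ Dmax ρ' ((1 : Matrix (Fin dA) (Fin dA) ℂ) ⊗ₖ σ) := by
    intro ρ' hρ' σ hσ
    obtain ⟨hpsd, htr⟩ := hball ρ' hρ'
    have := Dmax_lb (α := Fin dA) hσ ht₀ htr
    simpa [hcdef, Fintype.card_fin] using this
  have hdBne : (dB : ℂ) ≠ 0 := by exact_mod_cast hdB.ne'
  have hσ₀ : IsDensity (((dB : ℂ)⁻¹) • (1 : Matrix (Fin dB) (Fin dB) ℂ)) := by
    constructor
    · have heq : ((dB : ℂ)⁻¹) • (1 : Matrix (Fin dB) (Fin dB) ℂ)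
          = Matrix.diagonal (fun _ => (dB : ℂ)⁻¹) := by
        ext i j
        by_cases h : i = j <;> simp [Matrix.one_apply, h]
      rw [heq]
      refine Matrix.PosSemidef.diagonal ?_
      intro i
      rw [show ((dB : ℕ) : ℂ)⁻¹ = (((dB : ℝ)⁻¹ : ℝ) : ℂ) by push_cast; ring]
      exact Complex.zero_le_real.mpr (by positivity)
    · rw [Matrix.trace_smul, Matrix.trace_one]
      simp only [smul_eq_mul, Fintype.card_fin]
      exact inv_mul_cancel₀ hdBne
  have hρmem : ρ ∈ fidelityBall ε ρ := by
    refine ⟨⟨hρ.1, le_of_eq hρ1⟩, ?_⟩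
    rw [fidelity_self hρ.1, hρ1]
    nlinarith [sq_nonneg ε]
  -- abbreviation for the tensor state
  set ω : Matrix (Fin dB) (Fin dB) ℂ → Matrix (Fin dA × Fin dB) (Fin dA × Fin dB) ℂ :=
    fun σ => (1 : Matrix (Fin dA) (Fin dA) ℂ) ⊗ₖ σ with hωdef
  -- facts about the inner sSup (Hmin)
  have hNbdd : ∀ ρ' ∈ fidelityBall ε ρ,
      BddAbove {x : ℝ | ∃ σ : Matrix (Fin dB) (Fin dB) ℂ, IsDensity σ ∧ x = -Dmax ρ' (ω σ)} := by
    intro ρ' hρ'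
    refine ⟨-c, ?_⟩
    rintro x ⟨σ, hσ, rfl⟩
    exact neg_le_neg (hflb ρ' hρ' σ hσ)
  have hkey1 : ∀ ρ' ∈ fidelityBall ε ρ, ∀ σ : Matrix (Fin dB) (Fin dB) ℂ, IsDensity σ →
      -Dmax ρ' (ω σ) ≤ Hmin ρ' := by
    intro ρ' hρ' σ hσ
    rw [Hmin]
    exact le_csSup (hNbdd ρ' hρ') ⟨σ, hσ, rfl⟩
  have hHmin_le : ∀ ρ' ∈ fidelityBall ε ρ, Hmin ρ' ≤ -c := by
    intro ρ' hρ'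
    rw [Hmin]
    refine csSup_le ⟨_, ⟨_, hσ₀, rfl⟩⟩ ?_
    rintro x ⟨σ, hσ, rfl⟩
    exact neg_le_neg (hflb ρ' hρ' σ hσ)
  have hHbdd : BddAbove {x : ℝ | ∃ ρ' ∈ fidelityBall ε ρ, x = Hmin ρ'} := by
    refine ⟨-c, ?_⟩
    rintro x ⟨ρ', hρ', rfl⟩
    exact hHmin_le ρ' hρ'
  have hMbdd : ∀ σ : Matrix (Fin dB) (Fin dB) ℂ, IsDensity σ →
      BddBelow {x : ℝ | ∃ ρ' ∈ fidelityBall ε ρ, x = Dmax ρ' (ω σ)} := by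
    intro σ hσ
    refine ⟨c, ?_⟩
    rintro x ⟨ρ', hρ', rfl⟩
    exact hflb ρ' hρ' σ hσ
  have hRbdd : BddBelow {x : ℝ | ∃ σ : Matrix (Fin dB) (Fin dB) ℂ, IsDensity σ ∧
      x = DmaxSmooth ε ρ (ω σ)} := by
    refine ⟨c, ?_⟩
    rintro x ⟨σ, hσ, rfl⟩
    rw [DmaxSmooth]
    refine le_csInf ⟨_, ρ, hρmem, rfl⟩ ?_
    rintro y ⟨ρ', hρ', rfl⟩
    exact hflb ρ' hρ' σ hσ
  rw [HminSmooth]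
  apply le_antisymm
  · refine le_csInf ⟨_, _, hσ₀, rfl⟩ ?_
    rintro x ⟨σ, hσ, rfl⟩
    rw [DmaxSmooth]
    refine le_csInf ⟨_, ρ, hρmem, rfl⟩ ?_
    rintro y ⟨ρ', hρ', rfl⟩
    rw [neg_le]
    calc -Dmax ρ' (ω σ) ≤ Hmin ρ' := hkey1 ρ' hρ' σ hσ
      _ ≤ sSup {x : ℝ | ∃ ρ' ∈ fidelityBall ε ρ, x = Hmin ρ'} :=
          le_csSup hHbdd ⟨ρ', hρ', rfl⟩
  · rw [le_neg]
    refine csSup_le ⟨Hmin ρ, ⟨ρ, hρmem, rfl⟩⟩ ?_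
    rintro x ⟨ρ', hρ', rfl⟩
    rw [Hmin]
    refine csSup_le ⟨_, ⟨_, hσ₀, rfl⟩⟩ ?_
    rintro y ⟨σ, hσ, rfl⟩
    rw [neg_le_neg_iff]
    calc sInf {x : ℝ | ∃ σ : Matrix (Fin dB) (Fin dB) ℂ, IsDensity σ ∧
          x = DmaxSmooth ε ρ (ω σ)} ≤ DmaxSmooth ε ρ (ω σ) := csInf_le hRbdd ⟨σ, hσ, rfl⟩
      _ ≤ Dmax ρ' (ω σ) := by
          rw [DmaxSmooth]
          exact csInf_le (hMbdd σ hσ) ⟨ρ', hρ', rfl⟩
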